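/- Combining the two Jensen bounds: for independent positive random variables γ₁, γ₂ with all required integrability, ln(1+γ₁) and ln(1+γ₂) integrable, the quantity C = E[ln((1+γ₁)(1+γ₂)/(1+γ₁+γ₂))] satisfies E[ln(1+γ₁)] + E[ln(1+γ₂)] − ln(1+E[γ₁]+E[γ₂]) ≤ C ≤ E[ln(1+γ₁)] + E[ln(1+γ₂)] − ln(1 + e^{E[ln γ₁]} + e^{E[ln γ₂]}). -/

import Mathlib

/-!
Since `(1+γ₁)(1+γ₂)/(1+γ₁+γ₂)` has logarithm `ln(1+γ₁) + ln(1+γ₂) - ln(1+γ₁+γ₂)`, both bounds are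
Jensen's inequality for `E[ln(1+γ₁+γ₂)]`. For the lower bound of `C`, use concavity of `ln`. For
the upper bound, write `1+γ₁+γ₂ = 1 + e^{ln γ₁} + e^{ln γ₂}`: the function
`(x, y) ↦ ln(1 + eˣ + eʸ)` is a log-sum-exp, hence convex by Hölder's inequality.
-/

open MeasureTheory ProbabilityTheory Real

namespace Real

open Finset in
theorem sum_rpow_mul_rpow_le {ι : Type*} (s : Finset ι) {a b : ℝ} (ha : 0 ≤ a) (hb : 0 ≤ b)
    (hab : a + b = 1) {u v : ι → ℝ} (hu : ∀ i ∈ s, 0 ≤ u i) (hv : ∀ i ∈ s, 0 ≤ v i)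
    (hU : 0 < ∑ i ∈ s, u i) (hV : 0 < ∑ i ∈ s, v i) :
    ∑ i ∈ s, u i ^ a * v i ^ b ≤ (∑ i ∈ s, u i) ^ a * (∑ i ∈ s, v i) ^ b := by
  set U := ∑ i ∈ s, u i
  set V := ∑ i ∈ s, v i
  -- weighted AM-GM applied to the normalised terms `u i / U` and `v i / V`
  have hterm : ∀ i ∈ s, u i ^ a * v i ^ b ≤ (a * (u i / U) + b * (v i / V)) * (U ^ a * V ^ b) := by
    intro i hi
    calc u i ^ a * v i ^ b = (u i / U) ^ a * (v i / V) ^ b * (U ^ a * V ^ b) := by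
          rw [div_rpow (hu i hi) hU.le, div_rpow (hv i hi) hV.le]
          field_simp
      _ ≤ (a * (u i / U) + b * (v i / V)) * (U ^ a * V ^ b) := by
          gcongr
          exact geom_mean_le_arith_mean2_weighted ha hb (div_nonneg (hu i hi) hU.le)
            (div_nonneg (hv i hi) hV.le) hab
  have hweights : ∑ i ∈ s, (a * (u i / U) + b * (v i / V)) = 1 := by
    rw [sum_add_distrib, ← mul_sum, ← mul_sum, ← sum_div, ← sum_div, div_self hU.ne',
      div_self hV.ne', mul_one, mul_one, hab]
  calc ∑ i ∈ s, u i ^ a * v i ^ b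
      ≤ ∑ i ∈ s, (a * (u i / U) + b * (v i / V)) * (U ^ a * V ^ b) := sum_le_sum hterm
    _ = U ^ a * V ^ b := by rw [← sum_mul, hweights, one_mul]

theorem convexOn_log_sum_exp {ι : Type*} [Fintype ι] [Nonempty ι] :
    ConvexOn ℝ Set.univ (fun x : ι → ℝ => log (∑ i, exp (x i))) := by
  refine ⟨convex_univ, fun x _ y _ a b ha hb hab => ?_⟩
  have hX : 0 < ∑ i, exp (x i) := Finset.sum_pos (fun i _ => exp_pos _) Finset.univ_nonempty
  have hY : 0 < ∑ i, exp (y i) := Finset.sum_pos (fun i _ => exp_pos _) Finset.univ_nonempty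
  have hexp : ∀ i, exp ((a • x + b • y) i) = exp (x i) ^ a * exp (y i) ^ b := fun i => by
    simp only [Pi.add_apply, Pi.smul_apply, smul_eq_mul, exp_add, ← exp_mul, mul_comm]
  calc log (∑ i, exp ((a • x + b • y) i))
      ≤ log ((∑ i, exp (x i)) ^ a * (∑ i, exp (y i)) ^ b) := by
        simp only [hexp]
        exact log_le_log (Finset.sum_pos (fun i _ => by positivity) Finset.univ_nonempty)
          (sum_rpow_mul_rpow_le _ ha hb hab (fun i _ => (exp_pos _).le)
            (fun i _ => (exp_pos _).le) hX hY)
    _ = a • log (∑ i, exp (x i)) + b • log (∑ i, exp (y i)) := by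
        rw [log_mul (rpow_pos_of_pos hX a).ne' (rpow_pos_of_pos hY b).ne', log_rpow hX,
          log_rpow hY, smul_eq_mul, smul_eq_mul]

theorem convexOn_log_one_add_exp_add_exp :
    ConvexOn ℝ Set.univ (fun p : ℝ × ℝ => log (1 + exp p.1 + exp p.2)) := by
  let embed : ℝ × ℝ →ₗ[ℝ] Fin 3 → ℝ := LinearMap.pi ![0, LinearMap.fst ℝ ℝ ℝ, LinearMap.snd ℝ ℝ ℝ]
  have h := convexOn_log_sum_exp.comp_linearMap embed
  rw [Set.preimage_univ] at h
  refine h.congr fun p _ => ?_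
  simp [embed, Fin.sum_univ_three]

end Real

section Jensen

variable {Ω : Type*} [MeasurableSpace Ω] {μ : Measure Ω} [IsProbabilityMeasure μ]

theorem integral_log_le_log_integral {Z : Ω → ℝ} (hZ : ∀ ω, 0 < Z ω) (hint : Integrable Z μ)
    (hlog : Integrable (fun ω => log (Z ω)) μ) : ∫ ω, log (Z ω) ∂μ ≤ log (∫ ω, Z ω ∂μ) := by
  set m := ∫ ω, Z ω ∂μ
  have hm : 0 < m := by
    rw [integral_pos_iff_support_of_nonneg (fun ω => (hZ ω).le) hint,
      Function.support_eq_univ fun ω => (hZ ω).ne', measure_univ]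
    exact one_pos
  -- integrate the tangent line of `log` at `m`
  have htangent : ∀ ω, log (Z ω) ≤ Z ω / m + (log m - 1) := fun ω => by
    have := log_le_sub_one_of_pos (div_pos (hZ ω) hm)
    rw [log_div (hZ ω).ne' hm.ne'] at this
    linarith
  calc ∫ ω, log (Z ω) ∂μ ≤ ∫ ω, (Z ω / m + (log m - 1)) ∂μ :=
        integral_mono hlog ((hint.div_const m).add (integrable_const _)) htangent
    _ = log m := by
        rw [integral_add (hint.div_const m) (integrable_const _), integral_div, integral_const,
          div_self hm.ne']
        simp

theorem log_one_add_exp_integral_add_exp_integral_le {X Y : Ω → ℝ} (hX : Integrable X μ)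
    (hY : Integrable Y μ) (hint : Integrable (fun ω => log (1 + exp (X ω) + exp (Y ω))) μ) :
    log (1 + exp (∫ ω, X ω ∂μ) + exp (∫ ω, Y ω ∂μ)) ≤ ∫ ω, log (1 + exp (X ω) + exp (Y ω)) ∂μ := by
  have hcont : Continuous fun p : ℝ × ℝ => log (1 + exp p.1 + exp p.2) :=
    (by fun_prop : Continuous fun p : ℝ × ℝ => 1 + exp p.1 + exp p.2).log fun p => by positivity
  have h := convexOn_log_one_add_exp_add_exp.map_integral_le hcont.continuousOn isClosed_univ
    (.of_forall fun _ => Set.mem_univ _) (hX.prodMk hY) hint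
  rwa [integral_pair hX hY] at h

end Jensen

theorem capacity_jensen_bounds_general {Ω : Type*} [MeasurableSpace Ω]
    (μ : Measure Ω) [IsProbabilityMeasure μ] (γ₁ γ₂ : Ω → ℝ)
    (hpos₁ : ∀ ω, 0 < γ₁ ω) (hpos₂ : ∀ ω, 0 < γ₂ ω)
    (hint₁ : Integrable γ₁ μ) (hint₂ : Integrable γ₂ μ)
    (hlog₁ : Integrable (fun ω => Real.log (γ₁ ω)) μ)
    (hlog₂ : Integrable (fun ω => Real.log (γ₂ ω)) μ)
    (hlog1p₁ : Integrable (fun ω => Real.log (1 + γ₁ ω)) μ)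
    (hlog1p₂ : Integrable (fun ω => Real.log (1 + γ₂ ω)) μ)
    (hlogsum : Integrable (fun ω => Real.log (1 + γ₁ ω + γ₂ ω)) μ) :
    (∫ ω, Real.log (1 + γ₁ ω) ∂μ) + (∫ ω, Real.log (1 + γ₂ ω) ∂μ)
        - Real.log (1 + (∫ ω, γ₁ ω ∂μ) + ∫ ω, γ₂ ω ∂μ)
      ≤ ∫ ω, Real.log ((1 + γ₁ ω) * (1 + γ₂ ω) / (1 + γ₁ ω + γ₂ ω)) ∂μ ∧
    ∫ ω, Real.log ((1 + γ₁ ω) * (1 + γ₂ ω) / (1 + γ₁ ω + γ₂ ω)) ∂μ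
      ≤ (∫ ω, Real.log (1 + γ₁ ω) ∂μ) + (∫ ω, Real.log (1 + γ₂ ω) ∂μ)
        - Real.log (1 + Real.exp (∫ ω, Real.log (γ₁ ω) ∂μ)
            + Real.exp (∫ ω, Real.log (γ₂ ω) ∂μ)) := by
  have hlog_ratio : ∀ ω, log ((1 + γ₁ ω) * (1 + γ₂ ω) / (1 + γ₁ ω + γ₂ ω))
      = log (1 + γ₁ ω) + log (1 + γ₂ ω) - log (1 + γ₁ ω + γ₂ ω) := fun ω => by
    have := hpos₁ ω; have := hpos₂ ω
    rw [log_div (by positivity) (by positivity), log_mul (by positivity) (by positivity)]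
  have hC : ∫ ω, log ((1 + γ₁ ω) * (1 + γ₂ ω) / (1 + γ₁ ω + γ₂ ω)) ∂μ
      = (∫ ω, log (1 + γ₁ ω) ∂μ) + (∫ ω, log (1 + γ₂ ω) ∂μ)
        - ∫ ω, log (1 + γ₁ ω + γ₂ ω) ∂μ := by
    simp only [hlog_ratio]
    rw [integral_sub (f := fun ω => log (1 + γ₁ ω) + log (1 + γ₂ ω)) (hlog1p₁.add hlog1p₂)
      hlogsum, integral_add hlog1p₁ hlog1p₂]
  have hlower : ∫ ω, log (1 + γ₁ ω + γ₂ ω) ∂μ ≤ log (1 + (∫ ω, γ₁ ω ∂μ) + ∫ ω, γ₂ ω ∂μ) := by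
    have hsum : Integrable (fun ω => 1 + γ₁ ω + γ₂ ω) μ :=
      ((integrable_const 1).add hint₁).add hint₂
    have h := integral_log_le_log_integral (fun ω => by linarith [hpos₁ ω, hpos₂ ω]) hsum hlogsum
    rwa [integral_add (f := fun ω => 1 + γ₁ ω) ((integrable_const 1).add hint₁) hint₂,
      integral_add (integrable_const 1) hint₁, integral_const, probReal_univ, one_smul] at h
  have hupper : log (1 + exp (∫ ω, log (γ₁ ω) ∂μ) + exp (∫ ω, log (γ₂ ω) ∂μ))
      ≤ ∫ ω, log (1 + γ₁ ω + γ₂ ω) ∂μ := by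
    have hexp₁ : ∀ ω, exp (log (γ₁ ω)) = γ₁ ω := fun ω => exp_log (hpos₁ ω)
    have hexp₂ : ∀ ω, exp (log (γ₂ ω)) = γ₂ ω := fun ω => exp_log (hpos₂ ω)
    simpa only [hexp₁, hexp₂] using log_one_add_exp_integral_add_exp_integral_le hlog₁ hlog₂
      (by simpa only [hexp₁, hexp₂] using hlogsum)
  rw [hC]
  constructor <;> linarith

theorem capacity_jensen_bounds {Ω : Type*} [MeasurableSpace Ω]
    (μ : Measure Ω) [IsProbabilityMeasure μ] (γ₁ γ₂ : Ω → ℝ)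
    (hmeas₁ : Measurable γ₁) (hmeas₂ : Measurable γ₂)
    (hindep : IndepFun γ₁ γ₂ μ)
    (hpos₁ : ∀ ω, 0 < γ₁ ω) (hpos₂ : ∀ ω, 0 < γ₂ ω)
    (hint₁ : Integrable γ₁ μ) (hint₂ : Integrable γ₂ μ)
    (hlog₁ : Integrable (fun ω => Real.log (γ₁ ω)) μ)
    (hlog₂ : Integrable (fun ω => Real.log (γ₂ ω)) μ)
    (hlog1p₁ : Integrable (fun ω => Real.log (1 + γ₁ ω)) μ)
    (hlog1p₂ : Integrable (fun ω => Real.log (1 + γ₂ ω)) μ)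
    (hlogsum : Integrable (fun ω => Real.log (1 + γ₁ ω + γ₂ ω)) μ) :
    (∫ ω, Real.log (1 + γ₁ ω) ∂μ) + (∫ ω, Real.log (1 + γ₂ ω) ∂μ)
        - Real.log (1 + (∫ ω, γ₁ ω ∂μ) + ∫ ω, γ₂ ω ∂μ)
      ≤ ∫ ω, Real.log ((1 + γ₁ ω) * (1 + γ₂ ω) / (1 + γ₁ ω + γ₂ ω)) ∂μ ∧
    ∫ ω, Real.log ((1 + γ₁ ω) * (1 + γ₂ ω) / (1 + γ₁ ω + γ₂ ω)) ∂μ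
      ≤ (∫ ω, Real.log (1 + γ₁ ω) ∂μ) + (∫ ω, Real.log (1 + γ₂ ω) ∂μ)
        - Real.log (1 + Real.exp (∫ ω, Real.log (γ₁ ω) ∂μ)
            + Real.exp (∫ ω, Real.log (γ₂ ω) ∂μ)) :=
  capacity_jensen_bounds_general μ γ₁ γ₂ hpos₁ hpos₂ hint₁ hint₂ hlog₁ hlog₂ hlog1p₁ hlog1p₂ hlogsum
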